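/- arXiv:2308.06617 — 2 statements merged into one kernel-verified Lean document; each statement's English description precedes it below -/
import Mathlib

section
/- Knight's identity: for all real numbers u with u ≠ 0 and all real v, the check function ρ_τ(x) = x(τ - 1{x < 0}) satisfies ρ_τ(u - v) - ρ_τ(u) = -v·(τ - 1{u < 0}) + (u - v)·(1{v < u < 0} - 1{0 < u < v}). -/
/-! Expanding the check function gives, for all `u` and `v`,
`ρ_τ(u - v) - ρ_τ(u) = -v (τ - 1{u < 0}) + (u - v) (1{u < 0} - 1{u < v})`.
Since the last bracket is multiplied by `u - v`, only its values for `u ≠ v` matter, and for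
`u ≠ 0`, `u ≠ v` it equals `1{v < u < 0} - 1{0 < u < v}`. -/

variable {α : Type*} [CommRing α] [LinearOrder α]

def checkLoss (τ x : α) : α := x * (τ - if x < 0 then 1 else 0)

theorem checkLoss_sub_sub_checkLoss [IsOrderedAddMonoid α] (τ u v : α) :
    checkLoss τ (u - v) - checkLoss τ u
      = -v * (τ - if u < 0 then 1 else 0)
        + (u - v) * ((if u < 0 then 1 else 0) - if u < v then 1 else 0) := by
  simp only [checkLoss, sub_neg]
  ring

theorem sub_mul_indicator_sub_indicator {u : α} (hu : u ≠ 0) (v : α) :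
    (u - v) * ((if u < 0 then 1 else 0) - if u < v then 1 else 0)
      = (u - v) * ((if v < u ∧ u < 0 then 1 else 0) - if 0 < u ∧ u < v then 1 else 0) := by
  rcases eq_or_ne u v with rfl | huv
  · simp
  congr 1
  rcases hu.lt_or_gt with hu | hu <;> rcases huv.lt_or_gt with huv | huv <;>
    simp [hu, huv, hu.not_gt, huv.not_gt]

theorem knight_identity_general (τ u v : ℝ) (hu : u ≠ 0) :
    (fun x : ℝ => x * (τ - if x < 0 then 1 else 0)) (u - v)
      - (fun x : ℝ => x * (τ - if x < 0 then 1 else 0)) u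
    = -v * (τ - if u < 0 then 1 else 0)
      + (u - v) * ((if v < u ∧ u < 0 then (1:ℝ) else 0)
          - (if 0 < u ∧ u < v then (1:ℝ) else 0)) :=
  (checkLoss_sub_sub_checkLoss τ u v).trans
    (congrArg _ (sub_mul_indicator_sub_indicator hu v))

/-- Knight's identity for the quantile check function
`ρ_τ(x) = x (τ - 1{x < 0})`. -/
theorem knight_identity (τ u v : ℝ) (hτ : τ ∈ Set.Ioo (0:ℝ) 1) (hu : u ≠ 0) :
    (fun x : ℝ => x * (τ - if x < 0 then 1 else 0)) (u - v)
      - (fun x : ℝ => x * (τ - if x < 0 then 1 else 0)) u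
    = -v * (τ - if u < 0 then 1 else 0)
      + (u - v) * ((if v < u ∧ u < 0 then (1:ℝ) else 0)
          - (if 0 < u ∧ u < v then (1:ℝ) else 0)) :=
  knight_identity_general τ u v hu
end

section
/- Quantiles minimize expected check loss: if Y is an integrable real random variable with distribution function F and τ ∈ (0,1), then any τ-quantile q (i.e., any q with F(q⁻) ≤ τ ≤ F(q), where F(q⁻) = P(Y < q)) minimizes the function a ↦ E[ρ_τ(Y - a) - ρ_τ(Y)] over a ∈ ℝ. -/
open MeasureTheory

lemma aux_key1 (τ y a q : ℝ) (h : a ≤ q) :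
    (q - a) * (τ - if y < q then 1 else 0) ≤
      (y - a) * (τ - if y - a < 0 then 1 else 0)
        - (y - q) * (τ - if y - q < 0 then 1 else 0) := by
  split_ifs <;> nlinarith

lemma aux_key2 (τ y a q : ℝ) (h : q ≤ a) :
    (q - a) * (τ - if y ≤ q then 1 else 0) ≤
      (y - a) * (τ - if y - a < 0 then 1 else 0)
        - (y - q) * (τ - if y - q < 0 then 1 else 0) := by
  split_ifs <;> nlinarith

lemma aux_abs (τ x : ℝ) (h0 : 0 ≤ τ) (h1 : τ ≤ 1) :
    |x * (τ - if x < 0 then 1 else 0)| ≤ |x| := by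
  rw [abs_mul]
  apply mul_le_of_le_one_right (abs_nonneg x)
  rw [abs_le]; split_ifs <;> constructor <;> linarith

lemma aux_int_indicator {Ω : Type*} [MeasurableSpace Ω] (μ : Measure Ω)
    [IsProbabilityMeasure μ] (τ c : ℝ) {S : Set Ω} (hS : MeasurableSet S)
    [∀ ω, Decidable (ω ∈ S)] :
    Integrable (fun ω => c * (τ - if ω ∈ S then 1 else 0)) μ ∧
    ∫ ω, c * (τ - if ω ∈ S then 1 else 0) ∂μ = c * (τ - (μ S).toReal) := by
  have h2 : (fun ω => τ - if ω ∈ S then (1:ℝ) else 0)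
      = fun ω => τ - Set.indicator S (fun _ => (1:ℝ)) ω := by
    funext ω; simp [Set.indicator_apply]
  constructor
  · have : Integrable (fun ω => τ - Set.indicator S (fun _ => (1:ℝ)) ω) μ :=
      (integrable_const τ).sub ((integrable_const (1:ℝ)).indicator hS)
    have h3 := this.const_mul c
    refine h3.congr (ae_of_all _ fun ω => ?_)
    simp [Set.indicator_apply]
  · rw [MeasureTheory.integral_const_mul]
    congr 1
    rw [h2, integral_sub (integrable_const τ) ((integrable_const (1:ℝ)).indicator hS),
      integral_indicator_const _ hS]
    simp [Measure.real]

/-- Quantiles minimize expected check loss: if `Y` is integrable, `τ ∈ (0,1)`,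
and `q` is a `τ`-quantile of `Y` (i.e. `P(Y < q) ≤ τ ≤ P(Y ≤ q)`), then `q`
minimizes `a ↦ E[ρ_τ(Y - a) - ρ_τ(Y)]`. -/
theorem quantile_minimizes_check_loss {Ω : Type*} [MeasurableSpace Ω]
    (μ : Measure Ω) [IsProbabilityMeasure μ] (Y : Ω → ℝ) (hY : Measurable Y)
    (hint : Integrable Y μ) (τ : ℝ) (hτ : τ ∈ Set.Ioo (0:ℝ) 1) (q : ℝ)
    (hq1 : (μ {ω | Y ω < q}).toReal ≤ τ)
    (hq2 : τ ≤ (μ {ω | Y ω ≤ q}).toReal) :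
    ∀ a : ℝ,
      (∫ ω, ((fun x : ℝ => x * (τ - if x < 0 then 1 else 0)) (Y ω - q)
              - (fun x : ℝ => x * (τ - if x < 0 then 1 else 0)) (Y ω)) ∂μ)
        ≤ ∫ ω, ((fun x : ℝ => x * (τ - if x < 0 then 1 else 0)) (Y ω - a)
              - (fun x : ℝ => x * (τ - if x < 0 then 1 else 0)) (Y ω)) ∂μ := by
  intro a
  obtain ⟨hτ0, hτ1⟩ := hτ
  have hmeas : ∀ b : ℝ, Measurable fun ω => (Y ω - b) * (τ - if Y ω - b < 0 then 1 else 0) := by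
    intro b
    exact (hY.sub measurable_const).mul
      (measurable_const.sub (Measurable.ite
        (measurableSet_lt (hY.sub measurable_const) measurable_const)
        measurable_const measurable_const))
  have hR : ∀ b : ℝ, Integrable (fun ω => (Y ω - b) * (τ - if Y ω - b < 0 then 1 else 0)) μ := by
    intro b
    refine (hint.sub (integrable_const b)).mono (hmeas b).aestronglyMeasurable ?_
    exact ae_of_all _ fun ω => by
      simpa only [Real.norm_eq_abs, Pi.sub_apply] using aux_abs τ (Y ω - b) hτ0.le hτ1.le
  have hR0 : Integrable (fun ω => Y ω * (τ - if Y ω < 0 then 1 else 0)) μ := by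
    simpa using hR 0
  simp only []
  rw [integral_sub (hR q) hR0, integral_sub (hR a) hR0]
  have main : ∫ ω, (Y ω - q) * (τ - if Y ω - q < 0 then 1 else 0) ∂μ
      ≤ ∫ ω, (Y ω - a) * (τ - if Y ω - a < 0 then 1 else 0) ∂μ := by
    have hsub : Integrable (fun ω =>
        (Y ω - a) * (τ - if Y ω - a < 0 then 1 else 0)
          - (Y ω - q) * (τ - if Y ω - q < 0 then 1 else 0)) μ := (hR a).sub (hR q)
    rcases le_total a q with hle | hle
    · have hS : MeasurableSet {ω | Y ω < q} := measurableSet_lt hY measurable_const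
      obtain ⟨hg, hgval⟩ := aux_int_indicator μ τ (q - a) hS
      have hmem : ∀ ω, (ω ∈ {ω | Y ω < q}) = (Y ω < q) := fun ω => rfl
      have hpt : ∀ ω, (q - a) * (τ - if ω ∈ {ω | Y ω < q} then 1 else 0)
          ≤ (Y ω - a) * (τ - if Y ω - a < 0 then 1 else 0)
            - (Y ω - q) * (τ - if Y ω - q < 0 then 1 else 0) := by
        intro ω; simp only [hmem]; exact aux_key1 τ (Y ω) a q hle
      have h1 : (0:ℝ) ≤ (q - a) * (τ - (μ {ω | Y ω < q}).toReal) :=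
        mul_nonneg (by linarith) (by linarith)
      have h2 := integral_mono hg hsub hpt
      rw [hgval, integral_sub (hR a) (hR q)] at h2
      linarith
    · have hS : MeasurableSet {ω | Y ω ≤ q} := measurableSet_le hY measurable_const
      obtain ⟨hg, hgval⟩ := aux_int_indicator μ τ (q - a) hS
      have hmem : ∀ ω, (ω ∈ {ω | Y ω ≤ q}) = (Y ω ≤ q) := fun ω => rfl
      have hpt : ∀ ω, (q - a) * (τ - if ω ∈ {ω | Y ω ≤ q} then 1 else 0)
          ≤ (Y ω - a) * (τ - if Y ω - a < 0 then 1 else 0)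
            - (Y ω - q) * (τ - if Y ω - q < 0 then 1 else 0) := by
        intro ω; simp only [hmem]; exact aux_key2 τ (Y ω) a q hle
      have h1 : (0:ℝ) ≤ (q - a) * (τ - (μ {ω | Y ω ≤ q}).toReal) :=
        by nlinarith
      have h2 := integral_mono hg hsub hpt
      rw [hgval, integral_sub (hR a) (hR q)] at h2
      linarith
  linarith
end
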